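/- Contiguous Saalschütz formula. Let n and p be nonnegative integers, let a, b, c be complex numbers, and set σ = c − a − b − 1. Assume (c)_s ≠ 0 and (p − n − σ)_s ≠ 0 for 1 ≤ s ≤ n, (c − a − p)_k ≠ 0 and (c − b − p)_k ≠ 0 for 1 ≤ k ≤ min(p, n), and (c − a − b − p)_n ≠ 0. Then Σ_{s=0}^{n} (−n)_s (a)_s (b)_s / ( (c)_s (p − n − σ)_s s! ) = ( (c−a−p)_n (c−b−p)_n / ( (c)_n (c−a−b−p)_n ) ) · Σ_{k=0}^{min(p,n)} (−p)_k (−n)_k (c−a−b−p)_k / ( (c−a−p)_k (c−b−p)_k k! ). -/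

import Mathlib

/-!
After clearing denominators, a terminating `₃F₂(-n, a, b; c, d; 1)` becomes the polynomial
`H(a, b; c, d) = (c)ₙ (d)ₙ ₃F₂(…)`. Expanding `(b)ₛ` by Chu–Vandermonde and resumming gives
Sheppard's transformation `H(a, b; c, d) = (-1)ⁿ H(a, d - b; 1 + a - c - n, d)`. With `e` the lower
parameter `p - n - σ`, two applications of it (and the symmetry of `H` in its lower parameters)
carry `H(a, b; c, e)` to `H(a, -p; c - b - p, 1 + a - c - n)`, and one more carries
`H(-p, c - a - b - p; c - a - p, c - b - p)` to the same polynomial. On the right the factor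
`(-p)ₖ` cuts the series off at `min p n`.
-/

/-- Pochhammer symbol `(a)ₖ = a(a+1)⋯(a+k−1)` for complex `a`. -/
noncomputable def poch (a : ℂ) (k : ℕ) : ℂ := ∏ i ∈ Finset.range k, (a + i)

open Finset Polynomial Nat

lemma poch_eq_eval (a : ℂ) (k : ℕ) : poch a k = (ascPochhammer ℂ k).eval a := by
  induction k with
  | zero => simp [poch]
  | succ k ih => rw [poch, prod_range_succ, ← poch, ih, ascPochhammer_succ_eval]

lemma poch_add (a : ℂ) (j t : ℕ) : poch a (j + t) = poch a j * poch (a + j) t := by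
  simp only [poch, prod_range_add, Nat.cast_add, add_assoc]

lemma poch_mul_poch_sub {s n : ℕ} (a : ℂ) (h : s ≤ n) :
    poch a s * poch (a + s) (n - s) = poch a n := by
  rw [← poch_add, Nat.add_sub_cancel' h]

lemma poch_reflect (x : ℂ) (m : ℕ) : poch x m = (-1) ^ m * poch (1 - x - m) m := by
  rw [poch_eq_eval, poch_eq_eval, ← neg_neg x, ascPochhammer_eval_neg_eq_descPochhammer,
    descPochhammer_eval_eq_ascPochhammer]
  ring_nf

lemma poch_neg_natCast (n k : ℕ) : poch (-n) k = (-1) ^ k * k ! * n.choose k := by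
  rw [poch_eq_eval, ascPochhammer_eval_neg_eq_descPochhammer, descPochhammer_eval_eq_descFactorial,
    Nat.descFactorial_eq_factorial_mul_choose]
  push_cast
  ring

lemma poch_ne_zero_of_forall_pos {c : ℂ} {n k : ℕ} (h : ∀ s, 1 ≤ s → s ≤ n → poch c s ≠ 0)
    (hk : k ≤ n) : poch c k ≠ 0 := by
  rcases Nat.eq_zero_or_pos k with rfl | hk0
  · simp [poch]
  · exact h k hk0 hk

lemma poch_add_eq_sum (x y : ℂ) (n : ℕ) :
    poch (x + y) n = ∑ k ∈ range (n + 1), n.choose k * poch x k * poch y (n - k) := by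
  -- Mathlib's Chu–Vandermonde for falling factorials, evaluated at `-x` and `-y`
  have h := Ring.descPochhammer_smeval_add (R := ℂ) (r := -x) (s := -y) n (Commute.all _ _)
  simp only [← aeval_eq_smeval, aeval_def, eval₂_eq_eval_map, descPochhammer_map] at h
  rw [Nat.sum_antidiagonal_eq_sum_range_succ (fun i j => (n.choose i : ℂ) *
      ((descPochhammer ℂ i).eval (-x) * (descPochhammer ℂ j).eval (-y)))] at h
  rw [poch_eq_eval, ← neg_neg (x + y), ascPochhammer_eval_neg_eq_descPochhammer, neg_add, h,
    mul_sum]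
  refine sum_congr rfl fun k hk => ?_
  rw [poch_eq_eval, poch_eq_eval, ← neg_neg x, ← neg_neg y,
    ascPochhammer_eval_neg_eq_descPochhammer, ascPochhammer_eval_neg_eq_descPochhammer,
    neg_neg, neg_neg, ← Nat.add_sub_cancel' (mem_range_succ_iff.1 hk), pow_add,
    Nat.add_sub_cancel_left]
  ring

lemma poch_sub_eq_sum (x y : ℂ) (n : ℕ) :
    poch (x - y) n =
      ∑ k ∈ range (n + 1), (-1) ^ k * n.choose k * poch y k * poch (x + k) (n - k) := by
  rw [poch_reflect, show 1 - (x - y) - n = y + (1 - x - n) by ring, poch_add_eq_sum, mul_sum]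
  refine sum_congr rfl fun k hk => ?_
  have hkn := mem_range_succ_iff.1 hk
  rw [poch_reflect (x + k), Nat.cast_sub hkn, ← Nat.add_sub_cancel' hkn, pow_add,
    Nat.add_sub_cancel_left]
  ring_nf

lemma sum_range_succ_sum_range_succ_comm {M : Type*} [AddCommMonoid M] (n : ℕ) (f : ℕ → ℕ → M) :
    ∑ s ∈ range (n + 1), ∑ j ∈ range (s + 1), f s j
      = ∑ j ∈ range (n + 1), ∑ t ∈ range (n - j + 1), f (j + t) j := by
  calc _ = ∑ s ∈ range (n + 1), ∑ j ∈ range (s + 1), f (j + (s - j)) j :=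
        sum_congr rfl fun s _ => sum_congr rfl fun j hj => by
          rw [Nat.add_sub_cancel' (mem_range_succ_iff.1 hj)]
    _ = ∑ j ∈ range (n + 1), ∑ t ∈ range (n + 1 - j), f (j + t) j :=
        sum_range_diag_flip (n + 1) fun j t => f (j + t) j
    _ = _ := sum_congr rfl fun j hj => by rw [Nat.sub_add_comm (mem_range_succ_iff.1 hj)]

/-- `(c)ₙ (d)ₙ ₃F₂(-n, a, b; c, d; 1)` with the denominators cancelled termwise
(`(c)ₙ / (c)ₛ = (c + s)ₙ₋ₛ`, `(-n)ₛ / s! = (-1)ˢ C(n, s)`), so it makes sense for all parameters. -/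
noncomputable def cleared3F2 (n : ℕ) (a b c d : ℂ) : ℂ :=
  ∑ s ∈ range (n + 1),
    (-1) ^ s * n.choose s * poch a s * poch b s * poch (c + s) (n - s) * poch (d + s) (n - s)

lemma cleared3F2_comm_upper (n : ℕ) (a b c d : ℂ) : cleared3F2 n a b c d = cleared3F2 n b a c d :=
  sum_congr rfl fun _ _ => by ring

lemma cleared3F2_comm_lower (n : ℕ) (a b c d : ℂ) : cleared3F2 n a b c d = cleared3F2 n a b d c :=
  sum_congr rfl fun _ _ => by ring

lemma neg_one_pow_add_mul_self (j t : ℕ) : (-1 : ℂ) ^ (j + t) * (-1) ^ j = (-1) ^ t := by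
  rw [pow_add, mul_right_comm, ← pow_add, ← two_mul, pow_mul]
  simp

lemma cleared3F2_eq_sum (n : ℕ) (a b c d : ℂ) :
    cleared3F2 n a b c d = ∑ j ∈ range (n + 1),
      n.choose j * poch a j * poch (d - b) j * poch (d + j) (n - j) * poch (c - a) (n - j) := by
  have hexp : ∀ s, poch b s = ∑ j ∈ range (s + 1),
      (-1) ^ j * s.choose j * poch (d - b) j * poch (d + j) (s - j) := fun s => by
    rw [← poch_sub_eq_sum, sub_sub_cancel]
  have hterm : ∀ j t, j + t ≤ n →
      (-1) ^ (j + t) * n.choose (j + t) * poch a (j + t) *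
        ((-1) ^ j * (j + t).choose j * poch (d - b) j * poch (d + j) (j + t - j)) *
        poch (c + (j + t : ℕ)) (n - (j + t)) * poch (d + (j + t : ℕ)) (n - (j + t))
      = n.choose j * poch a j * poch (d - b) j * poch (d + j) (n - j) *
        ((-1) ^ t * (n - j).choose t * poch (a + j) t * poch (c + j + t) (n - j - t)) := by
    intro j t h
    have hchoose : (n.choose (j + t) * (j + t).choose j : ℂ) = n.choose j * (n - j).choose t := by
      exact_mod_cast (Nat.choose_mul (Nat.le_add_right j t)).trans (by rw [Nat.add_sub_cancel_left])
    rw [Nat.add_sub_cancel_left, poch_add, ← poch_mul_poch_sub (d + j) (show t ≤ n - j by omega),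
      Nat.sub_sub, Nat.cast_add, ← add_assoc, ← add_assoc]
    linear_combination (poch a j * poch (a + j) t * poch (d - b) j * poch (d + j) t *
      poch (c + j + t) (n - (j + t)) * poch (d + j + t) (n - (j + t))) *
      ((n.choose (j + t) * (j + t).choose j : ℂ) * neg_one_pow_add_mul_self j t +
        (-1) ^ t * hchoose)
  calc cleared3F2 n a b c d
      = ∑ s ∈ range (n + 1), ∑ j ∈ range (s + 1), (-1) ^ s * n.choose s * poch a s *
          ((-1) ^ j * s.choose j * poch (d - b) j * poch (d + j) (s - j)) *
          poch (c + s) (n - s) * poch (d + s) (n - s) := by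
        simp only [cleared3F2, hexp, mul_sum, sum_mul]
    _ = ∑ j ∈ range (n + 1), n.choose j * poch a j * poch (d - b) j * poch (d + j) (n - j) *
          ∑ t ∈ range (n - j + 1),
            (-1) ^ t * (n - j).choose t * poch (a + j) t * poch (c + j + t) (n - j - t) := by
        rw [sum_range_succ_sum_range_succ_comm]
        refine sum_congr rfl fun j hj => ?_
        rw [mul_sum]
        exact sum_congr rfl fun t ht => hterm j t (by simp only [mem_range] at hj ht; omega)
    _ = _ := by
        refine sum_congr rfl fun j _ => ?_
        rw [← poch_sub_eq_sum, add_sub_add_right_eq_sub]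

theorem cleared3F2_sheppard (n : ℕ) (a b c d : ℂ) :
    cleared3F2 n a b c d = (-1) ^ n * cleared3F2 n a (d - b) (1 + a - c - n) d := by
  rw [cleared3F2_eq_sum, cleared3F2, mul_sum]
  refine sum_congr rfl fun j hj => ?_
  have hjn := mem_range_succ_iff.1 hj
  have hsign : (-1 : ℂ) ^ n * (-1) ^ j = (-1) ^ (n - j) := by
    rw [← neg_one_pow_add_mul_self j (n - j), Nat.add_sub_cancel' hjn]
  rw [poch_reflect (c - a), Nat.cast_sub hjn, ← hsign,
    show 1 - (c - a) - (n - j : ℂ) = 1 + a - c - n + j by ring]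
  ring

theorem cleared3F2_contiguous (n p : ℕ) (a b c : ℂ) :
    cleared3F2 n a b c (p - n - (c - a - b - 1))
      = (-1) ^ n * cleared3F2 n (-p) (c - a - b - p) (c - a - p) (c - b - p) := by
  have hleft : cleared3F2 n a b c (p - n - (c - a - b - 1))
      = cleared3F2 n a (-p) (c - b - p) (1 + a - c - n) := by
    rw [cleared3F2_sheppard, cleared3F2_comm_lower, cleared3F2_sheppard, ← mul_assoc, ← mul_pow,
      show (1 : ℂ) + a - c - n - (p - n - (c - a - b - 1) - b) = -p by ring,
      show 1 + a - (p - n - (c - a - b - 1)) - n = c - b - p by ring]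
    norm_num
  have hright : cleared3F2 n (-p) (c - a - b - p) (c - a - p) (c - b - p)
      = (-1) ^ n * cleared3F2 n a (-p) (c - b - p) (1 + a - c - n) := by
    rw [cleared3F2_sheppard, show c - b - p - (c - a - b - p) = a by ring,
      show 1 + -p - (c - a - p) - n = 1 + a - c - n by ring, cleared3F2_comm_upper,
      cleared3F2_comm_lower]
  rw [hleft, hright, ← mul_assoc, ← mul_pow]
  norm_num

lemma cleared3F2_eq_mul_sum {n m : ℕ} {a b c d : ℂ} (hmn : m ≤ n)
    (hc : ∀ s, 1 ≤ s → s ≤ m → poch c s ≠ 0) (hd : ∀ s, 1 ≤ s → s ≤ m → poch d s ≠ 0)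
    (ha : ∀ s, m < s → s ≤ n → poch a s = 0) :
    cleared3F2 n a b c d = poch c n * poch d n * ∑ s ∈ range (m + 1),
      poch (-n) s * poch a s * poch b s / (poch c s * poch d s * s !) := by
  rw [cleared3F2, mul_sum]
  refine (sum_subset (range_subset_range.2 (by omega)) fun s hs hsm => ?_).symm.trans
    (sum_congr rfl fun s hs => ?_)
  · simp only [mem_range] at hs hsm
    simp [ha s (by omega) (by omega)]
  · have hsm := mem_range_succ_iff.1 hs
    rw [← poch_mul_poch_sub c (hsm.trans hmn), ← poch_mul_poch_sub d (hsm.trans hmn),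
      poch_neg_natCast]
    field_simp [poch_ne_zero_of_forall_pos hc hsm, poch_ne_zero_of_forall_pos hd hsm,
      Nat.factorial_ne_zero]

theorem contiguous_saalschutz_general
    (n p : ℕ) (a b c : ℂ)
    (hc : ∀ s, 1 ≤ s → s ≤ n → poch c s ≠ 0)
    (hd : ∀ s, 1 ≤ s → s ≤ n → poch ((p : ℂ) - n - (c - a - b - 1)) s ≠ 0)
    (hca : ∀ k, 1 ≤ k → k ≤ min p n → poch (c - a - p) k ≠ 0)
    (hcb : ∀ k, 1 ≤ k → k ≤ min p n → poch (c - b - p) k ≠ 0) :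
    ∑ s ∈ Finset.range (n + 1),
      poch (-(n : ℂ)) s * poch a s * poch b s /
        (poch c s * poch ((p : ℂ) - n - (c - a - b - 1)) s * (Nat.factorial s : ℂ))
      = poch (c - a - p) n * poch (c - b - p) n / (poch c n * poch (c - a - b - p) n) *
          ∑ k ∈ Finset.range (min p n + 1),
            poch (-(p : ℂ)) k * poch (-(n : ℂ)) k * poch (c - a - b - p) k /
              (poch (c - a - p) k * poch (c - b - p) k * (Nat.factorial k : ℂ)) := by
  have hlhs := cleared3F2_eq_mul_sum (a := a) (b := b) le_rfl hc hd
    fun _ hlt hle => absurd hle (not_le.2 hlt)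
  have hrhs := cleared3F2_eq_mul_sum (n := n) (a := -p) (b := c - a - b - p) (min_le_right p n)
    hca hcb fun s h _ => by rw [poch_neg_natCast, Nat.choose_eq_zero_of_lt (by omega)]; simp
  have hcn := poch_ne_zero_of_forall_pos hc le_rfl
  have hdn := poch_ne_zero_of_forall_pos hd le_rfl
  have hreflect : poch ((p : ℂ) - n - (c - a - b - 1)) n = (-1) ^ n * poch (c - a - b - p) n := by
    rw [poch_reflect]
    congr 2
    ring
  have hbn : poch (c - a - b - p) n ≠ 0 := fun h => hdn (by rw [hreflect, h, mul_zero])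
  rw [← mul_right_inj' (mul_ne_zero hcn hdn), ← hlhs, cleared3F2_contiguous, hrhs, hreflect]
  simp only [mul_comm (poch (-(p : ℂ)) _) (poch (-(n : ℂ)) _)]
  field_simp

/-- **Contiguous Saalschütz formula.** -/
theorem contiguous_saalschutz
    (n p : ℕ) (a b c : ℂ)
    (hc : ∀ s, 1 ≤ s → s ≤ n → poch c s ≠ 0)
    (hd : ∀ s, 1 ≤ s → s ≤ n → poch ((p : ℂ) - n - (c - a - b - 1)) s ≠ 0)
    (hca : ∀ k, 1 ≤ k → k ≤ min p n → poch (c - a - p) k ≠ 0)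
    (hcb : ∀ k, 1 ≤ k → k ≤ min p n → poch (c - b - p) k ≠ 0)
    (hcab : poch (c - a - b - p) n ≠ 0) :
    ∑ s ∈ Finset.range (n + 1),
      poch (-(n : ℂ)) s * poch a s * poch b s /
        (poch c s * poch ((p : ℂ) - n - (c - a - b - 1)) s * (Nat.factorial s : ℂ))
      = poch (c - a - p) n * poch (c - b - p) n / (poch c n * poch (c - a - b - p) n) *
          ∑ k ∈ Finset.range (min p n + 1),
            poch (-(p : ℂ)) k * poch (-(n : ℂ)) k * poch (c - a - b - p) k /
              (poch (c - a - p) k * poch (c - b - p) k * (Nat.factorial k : ℂ)) :=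
  contiguous_saalschutz_general n p a b c hc hd hca hcb
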